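/- arXiv:2301.09891 — 3 statements merged into one kernel-verified Lean document; each statement's English description precedes it below -/
import Mathlib

section
/- If φ satisfies ‖φ − √π‖_{L²} ≤ ε and τ ≤ ‖φ − √π‖²_{L²}, then the function √π̂ with π̂(x) = φ(x)² + τλ(x), where λ is a probability density, satisfies ‖√π̂ − √π‖_{L²} ≤ √2 ε. -/
open MeasureTheory Real

/-- Expanding both squares, this reduces to `p * a ≤ p * √(a ^ 2 + b)`. -/
lemma sq_sqrt_sq_add_sub_le {a b p : ℝ} (hb : 0 ≤ b) (hp : 0 ≤ p) :
    (√(a ^ 2 + b) - p) ^ 2 ≤ (a - p) ^ 2 + b := by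
  have hsq : √(a ^ 2 + b) ^ 2 = a ^ 2 + b := sq_sqrt (by positivity)
  have hle : a ≤ √(a ^ 2 + b) := le_sqrt_of_sq_le (by linarith)
  nlinarith [mul_le_mul_of_nonneg_left hle hp]

lemma integral_sq_sqrt_sq_add_sub_le {α : Type*} [MeasurableSpace α] {μ : Measure α}
    {f p w : α → ℝ} (hp : ∀ x, 0 ≤ p x) (hw : ∀ x, 0 ≤ w x)
    (hf : Integrable (fun x => (f x - p x) ^ 2) μ) (hwi : Integrable w μ) :
    ∫ x, (√(f x ^ 2 + w x) - p x) ^ 2 ∂μ ≤ ∫ x, (f x - p x) ^ 2 ∂μ + ∫ x, w x ∂μ := by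
  rw [← integral_add hf hwi]
  exact integral_mono_of_nonneg (.of_forall fun x => sq_nonneg _) (hf.add hwi)
    (.of_forall fun x => sq_sqrt_sq_add_sub_le (hw x) (hp x))

theorem stmt0_general {m : ℕ} (pi φ lam : (Fin m → ℝ) → ℝ) (ε τ : ℝ)
    (hlam : ∀ x, 0 ≤ lam x) (hlamint : ∫ x, lam x = 1)
    (hφ : Integrable (fun x => (φ x - Real.sqrt (pi x)) ^ 2))
    (hτ : 0 ≤ τ)
    (herr : Real.sqrt (∫ x, (φ x - Real.sqrt (pi x)) ^ 2) ≤ ε)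
    (hτle : τ ≤ ∫ x, (φ x - Real.sqrt (pi x)) ^ 2) :
    Real.sqrt (∫ x, (Real.sqrt ((φ x) ^ 2 + τ * lam x) - Real.sqrt (pi x)) ^ 2)
      ≤ Real.sqrt 2 * ε := by
  set I := ∫ x, (φ x - √(pi x)) ^ 2
  have hlamI : Integrable lam := .of_integral_ne_zero (by simp [hlamint])
  have hbound := integral_sq_sqrt_sq_add_sub_le (fun x => sqrt_nonneg (pi x))
    (fun x => mul_nonneg hτ (hlam x)) hφ (hlamI.const_mul τ)
  rw [integral_const_mul, hlamint, mul_one] at hbound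
  calc √(∫ x, (√(φ x ^ 2 + τ * lam x) - √(pi x)) ^ 2)
      ≤ √(2 * I) := sqrt_le_sqrt (by linarith)
    _ = √2 * √I := sqrt_mul zero_le_two I
    _ ≤ √2 * ε := by gcongr

/-- Squared-TT defensive approximation error: if `‖φ - √pi‖_{L²} ≤ ε` and
`τ ≤ ‖φ - √pi‖²_{L²}`, then `piHat = φ² + τ·lam` (with `lam` a probability
density) satisfies `‖√piHat - √pi‖_{L²} ≤ √2 ε`. -/
theorem stmt0 {m : ℕ} (pi φ lam : (Fin m → ℝ) → ℝ) (ε τ : ℝ)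
    (hpi : ∀ x, 0 ≤ pi x) (hpiint : Integrable pi)
    (hlam : ∀ x, 0 ≤ lam x) (hlamint : ∫ x, lam x = 1)
    (hφ : Integrable (fun x => (φ x - Real.sqrt (pi x)) ^ 2))
    (hε : 0 < ε) (hτ : 0 ≤ τ)
    (herr : Real.sqrt (∫ x, (φ x - Real.sqrt (pi x)) ^ 2) ≤ ε)
    (hτle : τ ≤ ∫ x, (φ x - Real.sqrt (pi x)) ^ 2) :
    Real.sqrt (∫ x, (Real.sqrt ((φ x) ^ 2 + τ * lam x) - Real.sqrt (pi x)) ^ 2)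
      ≤ Real.sqrt 2 * ε :=
  stmt0_general pi φ lam ε τ hlam hlamint hφ hτ herr hτle
end

section
/- Let p = π/z and p̂ = π̂/ẑ be normalized densities with z = ∫π and ẑ = ∫π̂. Then the Hellinger distance satisfies d_H(p̂, p) ≤ (√2/√z)·‖√π̂ − √π‖_{L²}. -/
/-!
Put `F = √π̂` and `G = √π` in `L²`, so that `‖F‖ = √ẑ`, `‖G‖ = √z`, and `√p̂ = F / ‖F‖`,
`√p = G / ‖G‖`. Normalization is Lipschitz away from the origin:
`F/‖F‖ - G/‖G‖ = (F - G)/‖G‖ + (1/‖F‖ - 1/‖G‖) F`, and the second term has norm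
`|‖G‖ - ‖F‖| / ‖G‖ ≤ ‖F - G‖ / ‖G‖`. Hence `‖√p̂ - √p‖ ≤ (2/√z) ‖√π̂ - √π‖`.
-/

open MeasureTheory Real

theorem norm_inv_norm_smul_sub_inv_norm_smul_le {E : Type*} [NormedAddCommGroup E]
    [NormedSpace ℝ E] (x : E) {y : E} (hy : y ≠ 0) :
    ‖‖x‖⁻¹ • x - ‖y‖⁻¹ • y‖ ≤ 2 / ‖y‖ * ‖x - y‖ := by
  have hy' : 0 < ‖y‖ := norm_pos_iff.mpr hy
  have hrescale : ‖(‖x‖⁻¹ - ‖y‖⁻¹) • x‖ ≤ ‖y‖⁻¹ * ‖x - y‖ := by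
    rcases eq_or_ne x 0 with rfl | hx
    · simp only [norm_zero, smul_zero, zero_sub, norm_neg]; positivity
    have hx' : 0 < ‖x‖ := norm_pos_iff.mpr hx
    have hcoeff : (‖x‖⁻¹ - ‖y‖⁻¹) * ‖x‖ = ‖y‖⁻¹ * (‖y‖ - ‖x‖) := by field_simp
    calc ‖(‖x‖⁻¹ - ‖y‖⁻¹) • x‖ = |(‖x‖⁻¹ - ‖y‖⁻¹) * ‖x‖| := by
          rw [norm_smul, Real.norm_eq_abs, abs_mul, abs_norm]
      _ = ‖y‖⁻¹ * |‖y‖ - ‖x‖| := by rw [hcoeff, abs_mul, abs_inv, abs_norm]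
      _ ≤ ‖y‖⁻¹ * ‖x - y‖ := by
          gcongr
          rw [norm_sub_rev x y]
          exact abs_norm_sub_norm_le y x
  calc ‖‖x‖⁻¹ • x - ‖y‖⁻¹ • y‖ = ‖‖y‖⁻¹ • (x - y) + (‖x‖⁻¹ - ‖y‖⁻¹) • x‖ := by
        rw [smul_sub, sub_smul]; abel_nf
    _ ≤ ‖y‖⁻¹ * ‖x - y‖ + ‖y‖⁻¹ * ‖x - y‖ := by
        grw [norm_add_le, norm_smul, Real.norm_of_nonneg (inv_nonneg.mpr hy'.le), hrescale]
    _ = 2 / ‖y‖ * ‖x - y‖ := by ring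

namespace MeasureTheory

variable {α : Type*} [MeasurableSpace α] {μ : Measure α}

theorem MemLp.norm_toLp_two {f : α → ℝ} (hf : MemLp f 2 μ) :
    ‖hf.toLp f‖ = √(∫ x, f x ^ 2 ∂μ) := by
  have hinner : inner ℝ (hf.toLp f) (hf.toLp f) = ∫ x, f x ^ 2 ∂μ := by
    rw [L2.inner_def]
    refine integral_congr_ae ?_
    filter_upwards [hf.coeFn_toLp] with x hx
    simp [hx, sq]
  rw [← hinner, real_inner_self_eq_norm_sq, Real.sqrt_sq (norm_nonneg _)]

theorem Integrable.memLp_two_sqrt {f : α → ℝ} (hf : Integrable f μ) :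
    MemLp (fun x => √(f x)) 2 μ := by
  rw [memLp_two_iff_integrable_sq (by fun_prop)]
  simpa only [Real.sq_sqrt'] using hf.pos_part

theorem Integrable.norm_toLp_sqrt {f : α → ℝ} (hf : Integrable f μ) (hf0 : 0 ≤ᵐ[μ] f) :
    ‖hf.memLp_two_sqrt.toLp _‖ = √(∫ x, f x ∂μ) := by
  rw [MemLp.norm_toLp_two]
  congr 1
  refine integral_congr_ae ?_
  filter_upwards [hf0] with x hx
  exact Real.sq_sqrt hx

end MeasureTheory

theorem stmt1_general {m : ℕ} (pi piHat : (Fin m → ℝ) → ℝ)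
    (hpi : ∀ x, 0 ≤ pi x) (hpiHat : ∀ x, 0 ≤ piHat x)
    (hpiint : Integrable pi) (hpiHatint : Integrable piHat)
    (z zHat : ℝ) (hz : z = ∫ x, pi x) (hzHat : zHat = ∫ x, piHat x)
    (hzpos : 0 < z) :
    (1 / Real.sqrt 2) *
        Real.sqrt (∫ x, (Real.sqrt (piHat x / zHat) - Real.sqrt (pi x / z)) ^ 2)
      ≤ (Real.sqrt 2 / Real.sqrt z) *
        Real.sqrt (∫ x, (Real.sqrt (piHat x) - Real.sqrt (pi x)) ^ 2) := by
  set F := hpiHatint.memLp_two_sqrt.toLp _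
  set G := hpiint.memLp_two_sqrt.toLp _
  have hF : ‖F‖ = √zHat := by
    rw [hzHat]; exact hpiHatint.norm_toLp_sqrt (.of_forall hpiHat)
  have hG : ‖G‖ = √z := by
    rw [hz]; exact hpiint.norm_toLp_sqrt (.of_forall hpi)
  have hG0 : G ≠ 0 := norm_ne_zero_iff.mp (by rw [hG]; positivity)
  have hdiff : ‖F - G‖ = √(∫ x, (√(piHat x) - √(pi x)) ^ 2) := by
    rw [← MemLp.toLp_sub, MemLp.norm_toLp_two]; rfl
  have hnormalized :
      ‖‖F‖⁻¹ • F - ‖G‖⁻¹ • G‖ = √(∫ x, (√(piHat x / zHat) - √(pi x / z)) ^ 2) := by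
    rw [← MemLp.toLp_const_smul, ← MemLp.toLp_const_smul, ← MemLp.toLp_sub,
      MemLp.norm_toLp_two, hF, hG]
    simp only [Pi.sub_apply, Pi.smul_apply, smul_eq_mul, Real.sqrt_div (hpiHat _),
      Real.sqrt_div (hpi _), inv_mul_eq_div]
  rw [← hdiff, ← hnormalized]
  calc 1 / √2 * ‖‖F‖⁻¹ • F - ‖G‖⁻¹ • G‖ ≤ 1 / √2 * (2 / ‖G‖ * ‖F - G‖) := by
        grw [norm_inv_norm_smul_sub_inv_norm_smul_le F hG0]
    _ = √2 / √z * ‖F - G‖ := by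
        rw [hG]
        field_simp
        norm_num

/-- Hellinger distance between normalized densities `p = pi/z` and
`pHat = piHat/zHat` is bounded by `(√2/√z)·‖√piHat − √pi‖_{L²}`, where
`d_H(pHat,p) = (1/√2)·‖√pHat − √p‖_{L²}`. -/
theorem stmt1 {m : ℕ} (pi piHat : (Fin m → ℝ) → ℝ)
    (hpi : ∀ x, 0 ≤ pi x) (hpiHat : ∀ x, 0 ≤ piHat x)
    (hpiint : Integrable pi) (hpiHatint : Integrable piHat)
    (z zHat : ℝ) (hz : z = ∫ x, pi x) (hzHat : zHat = ∫ x, piHat x)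
    (hzpos : 0 < z) (hzHatpos : 0 < zHat) :
    (1 / Real.sqrt 2) *
        Real.sqrt (∫ x, (Real.sqrt (piHat x / zHat) - Real.sqrt (pi x / z)) ^ 2)
      ≤ (Real.sqrt 2 / Real.sqrt z) *
        Real.sqrt (∫ x, (Real.sqrt (piHat x) - Real.sqrt (pi x)) ^ 2) :=
  stmt1_general pi piHat hpi hpiHat hpiint hpiHatint z zHat hz hzHat hzpos
end

section
/- Under the same setting, with r(x',θ) = ∫ f(x|x',θ)g(x)dx ≤ C, the square roots satisfy ‖√q_t − √π_t‖_{L²} ≤ √C · ‖√π̂ − √π‖_{L²}, where q_t(x,θ,x') = π̂(x',θ)f(x|x',θ)g(x) and π_t(x,θ,x') = π(x',θ)f(x|x',θ)g(x). -/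
/-!
For `c ≥ 0`, `√(a c) - √(b c) = (√a - √b) √c`, so the integrand on the left is
`(√π̂ - √π)²(x', θ) · f(x | x', θ) g(x)`. Integrating out `x` first (Fubini) bounds the inner
integral by `C (√π̂ - √π)²(x', θ)`, and the swap `(θ, x') ↦ (x', θ)` identifies the remaining
integral with `‖√π̂ - √π‖²`.
-/

open MeasureTheory

lemma Real.sqrt_mul_sub_sqrt_mul_sq (a b : ℝ) {c : ℝ} (hc : 0 ≤ c) :
    (√(a * c) - √(b * c)) ^ 2 = (√a - √b) ^ 2 * c := by
  rw [Real.sqrt_mul' a hc, Real.sqrt_mul' b hc, ← sub_mul, mul_pow, Real.sq_sqrt hc]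

lemma Real.sq_sqrt_le_abs (a : ℝ) : √a ^ 2 ≤ |a| := by
  rw [← Real.sq_sqrt (abs_nonneg a)]
  gcongr
  exact le_abs_self a

lemma Real.sq_sqrt_sub_sqrt_le (a b : ℝ) : (√a - √b) ^ 2 ≤ |a| + |b| := by
  nlinarith [Real.sq_sqrt_le_abs a, Real.sq_sqrt_le_abs b,
    mul_nonneg (Real.sqrt_nonneg a) (Real.sqrt_nonneg b)]

lemma MeasureTheory.Integrable.sq_sqrt_sub_sqrt {α : Type*} [MeasurableSpace α] {μ : Measure α}
    {u v : α → ℝ} (hu : Integrable u μ) (hv : Integrable v μ) :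
    Integrable (fun p => (√(u p) - √(v p)) ^ 2) μ := by
  refine (hu.abs.add hv.abs).mono' ?_ (.of_forall fun p => ?_)
  · exact ((Real.continuous_sqrt.comp_aestronglyMeasurable hu.1).sub
      (Real.continuous_sqrt.comp_aestronglyMeasurable hv.1)).pow 2
  · rw [Real.norm_of_nonneg (sq_nonneg _)]
    exact Real.sq_sqrt_sub_sqrt_le (u p) (v p)

lemma MeasureTheory.integral_prod_mul_le_mul_integral {α β : Type*}
    [MeasurableSpace α] [MeasurableSpace β] {μ : Measure β} {ρ : Measure α} [SFinite μ]
    [SFinite ρ] {s : α → ℝ} {k : β → α → ℝ} {C : ℝ} (hs0 : 0 ≤ s) (hs : Integrable s ρ)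
    (hkC : ∀ a, ∫ b, k b a ∂μ ≤ C)
    (hF : Integrable (fun p : β × α => s p.2 * k p.1 p.2) (μ.prod ρ)) :
    ∫ p, s p.2 * k p.1 p.2 ∂(μ.prod ρ) ≤ C * ∫ a, s a ∂ρ := by
  have hfiber : ∀ a, ∫ b, s a * k b a ∂μ ≤ C * s a := fun a => by
    rw [integral_const_mul, mul_comm C]
    exact mul_le_mul_of_nonneg_left (hkC a) (hs0 a)
  rw [integral_prod_symm _ hF, ← integral_const_mul]
  exact integral_mono hF.integral_prod_right (hs.const_mul C) hfiber

theorem stmt6_general {X Θ : Type*} [MeasurableSpace X] [MeasurableSpace Θ]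
    (μ : Measure X) (ν : Measure Θ) [SigmaFinite μ] [SigmaFinite ν]
    (f : X → X → Θ → ℝ) (g : X → ℝ) (C : ℝ)
    (hf0 : ∀ x x' θ, 0 ≤ f x x' θ) (hg0 : ∀ x, 0 ≤ g x)
    (hC : ∀ x' θ, ∫ x, f x x' θ * g x ∂μ ≤ C)
    (pi piHat : X × Θ → ℝ)
    (hpi : Integrable pi (μ.prod ν)) (hpiHat : Integrable piHat (μ.prod ν))
    (hqint : Integrable
      (fun p : X × Θ × X =>
        (Real.sqrt (piHat (p.2.2, p.2.1) * f p.1 p.2.2 p.2.1 * g p.1)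
          - Real.sqrt (pi (p.2.2, p.2.1) * f p.1 p.2.2 p.2.1 * g p.1)) ^ 2)
      (μ.prod (ν.prod μ))) :
    Real.sqrt (∫ p : X × Θ × X,
        (Real.sqrt (piHat (p.2.2, p.2.1) * f p.1 p.2.2 p.2.1 * g p.1)
          - Real.sqrt (pi (p.2.2, p.2.1) * f p.1 p.2.2 p.2.1 * g p.1)) ^ 2
        ∂(μ.prod (ν.prod μ)))
      ≤ Real.sqrt C *
        Real.sqrt (∫ p, (Real.sqrt (piHat p) - Real.sqrt (pi p)) ^ 2
          ∂(μ.prod ν)) := by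
  set s : X × Θ → ℝ := fun p => (√(piHat p) - √(pi p)) ^ 2
  have hs : Integrable s (μ.prod ν) := hpiHat.sq_sqrt_sub_sqrt hpi
  have hq : ∀ p : X × Θ × X,
      (√(piHat (p.2.2, p.2.1) * f p.1 p.2.2 p.2.1 * g p.1)
        - √(pi (p.2.2, p.2.1) * f p.1 p.2.2 p.2.1 * g p.1)) ^ 2
        = s p.2.swap * (f p.1 p.2.2 p.2.1 * g p.1) := fun p => by
    simp only [mul_assoc]
    exact Real.sqrt_mul_sub_sqrt_mul_sq _ _ (mul_nonneg (hf0 _ _ _) (hg0 _))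
  simp only [hq] at hqint ⊢
  calc √(∫ p, s p.2.swap * (f p.1 p.2.2 p.2.1 * g p.1) ∂(μ.prod (ν.prod μ)))
      ≤ √(C * ∫ a, s a.swap ∂(ν.prod μ)) :=
        Real.sqrt_le_sqrt (integral_prod_mul_le_mul_integral (fun _ => sq_nonneg _) hs.swap
          (fun a => hC a.2 a.1) hqint)
    _ = √C * √(∫ p, s p ∂(μ.prod ν)) := by
        rw [integral_prod_swap, Real.sqrt_mul' C (integral_nonneg fun _ => sq_nonneg _)]

/-- L² propagation bound for square roots: with
`q_t(x,θ,x') = piHat(x',θ) f(x|x',θ) g(x)` and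
`pi_t(x,θ,x') = pi(x',θ) f(x|x',θ) g(x)` and
`sup_{x',θ} ∫ f(x|x',θ) g(x) dx ≤ C`, we have
`‖√q_t − √pi_t‖_{L²} ≤ √C ‖√piHat − √pi‖_{L²}`. -/
theorem stmt6 {X Θ : Type*} [MeasurableSpace X] [MeasurableSpace Θ]
    (μ : Measure X) (ν : Measure Θ) [SigmaFinite μ] [SigmaFinite ν]
    (f : X → X → Θ → ℝ) (g : X → ℝ) (C : ℝ)
    (hf0 : ∀ x x' θ, 0 ≤ f x x' θ) (hg0 : ∀ x, 0 ≤ g x)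
    (hC : ∀ x' θ, ∫ x, f x x' θ * g x ∂μ ≤ C)
    (hfgint : ∀ x' θ, Integrable (fun x => f x x' θ * g x) μ)
    (pi piHat : X × Θ → ℝ)
    (hpi0 : ∀ p, 0 ≤ pi p) (hpiHat0 : ∀ p, 0 ≤ piHat p)
    (hpi : Integrable pi (μ.prod ν)) (hpiHat : Integrable piHat (μ.prod ν))
    (hqint : Integrable
      (fun p : X × Θ × X =>
        (Real.sqrt (piHat (p.2.2, p.2.1) * f p.1 p.2.2 p.2.1 * g p.1)
          - Real.sqrt (pi (p.2.2, p.2.1) * f p.1 p.2.2 p.2.1 * g p.1)) ^ 2)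
      (μ.prod (ν.prod μ))) :
    Real.sqrt (∫ p : X × Θ × X,
        (Real.sqrt (piHat (p.2.2, p.2.1) * f p.1 p.2.2 p.2.1 * g p.1)
          - Real.sqrt (pi (p.2.2, p.2.1) * f p.1 p.2.2 p.2.1 * g p.1)) ^ 2
        ∂(μ.prod (ν.prod μ)))
      ≤ Real.sqrt C *
        Real.sqrt (∫ p, (Real.sqrt (piHat p) - Real.sqrt (pi p)) ^ 2
          ∂(μ.prod ν)) :=
  stmt6_general μ ν f g C hf0 hg0 hC pi piHat hpi hpiHat hqint
end
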